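/- Let N ≥ 2 and let μ_∞ be a Haar measure on SL_N(ℝ). There exist constants c, C > 0 such that for every ε ∈ (0,1], c·ε^{N²−1} ≤ μ_∞({g ∈ SL_N(ℝ) : max_{i,j} |g_{ij} − δ_{ij}| ≤ ε}) ≤ C·ε^{N²−1}, where δ_{ij} is the Kronecker delta (so the set is the ε-ball around the identity matrix in the sup norm, intersected with SL_N(ℝ)). -/

import Mathlib

open MeasureTheory

instance {m n α : Type*} [MeasurableSpace α] : MeasurableSpace (Matrix m n α) :=
  inferInstanceAs (MeasurableSpace (m → n → α))

/-- `μ` is a Haar measure on `SL_N(ℝ)`, viewed as a measure on the ambient matrix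
space supported on `{det = 1}`. -/
def IsHaarOnSL {N : ℕ} (μ : Measure (Matrix (Fin N) (Fin N) ℝ)) : Prop :=
  μ {x | x.det ≠ 1} = 0 ∧
  (∀ g : Matrix (Fin N) (Fin N) ℝ, g.det = 1 →
    ∀ A : Set (Matrix (Fin N) (Fin N) ℝ), MeasurableSet A →
      μ ((fun x => g * x) ⁻¹' A) = μ A) ∧
  (∀ U : Set (Matrix (Fin N) (Fin N) ℝ), IsOpen U →
    (U ∩ {x | x.det = 1}).Nonempty → 0 < μ U) ∧
  (∀ C : Set (Matrix (Fin N) (Fin N) ℝ), IsCompact C → μ C < ⊤)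

/-!
Fix a diagonal position `(i₀, i₀)`. The determinant is affine in the `(i₀, i₀)` entry, with slope
the cofactor `adjugate x i₀ i₀`, which equals `1` at the identity. Solving `det = 1` for that entry
expresses `SL_N(ℝ)` near `1` as a bi-Lipschitz image of a ball in `ℝ^(N²-1)`, the space of the
remaining entries. Pushing a cubical grid of mesh `≍ ε` through this chart gives `≍ ε^-(N²-1)`
elements `g` of `SL_N(ℝ)` whose left translates `g • slBall ε` either cover a fixed neighbourhood
of `1` in `SL_N(ℝ)` (lower bound) or, for a coarser mesh, are pairwise disjoint inside a fixed
compact set (upper bound). By left invariance each translate has measure `μ (slBall ε)`.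
-/

open Matrix Metric Set Finset
open scoped NNReal ENNReal Topology

namespace Matrix

theorem updateRow_add_smul_single {m n α : Type*} [DecidableEq m] [DecidableEq n] [Ring α]
    (A : Matrix m n α) (i : m) (j : n) (c : α) (v : n → α) :
    (A + c • single i j 1).updateRow i v = A.updateRow i v := by
  ext k l
  by_cases hk : k = i <;> simp [hk, updateRow_apply, Ne.symm]

variable {n α : Type*} [Fintype n] [DecidableEq n] [CommRing α]

theorem det_add_smul_single (A : Matrix n n α) (i j : n) (c : α) :
    (A + c • single i j 1).det = A.det + c * A.adjugate j i := by
  have h : A + c • single i j 1 = A.updateRow i (A i + c • Pi.single j 1) := by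
    ext k l
    by_cases hk : k = i <;> by_cases hl : l = j <;> simp [hk, hl, updateRow_apply, Ne.symm]
  rw [h, det_updateRow_add, updateRow_eq_self, det_updateRow_smul, adjugate_apply]

theorem adjugate_add_smul_single_apply (A : Matrix n n α) (i j : n) (c : α) :
    (A + c • single i j 1).adjugate j i = A.adjugate j i := by
  rw [adjugate_apply, adjugate_apply, updateRow_add_smul_single]

theorem inv_eq_adjugate_of_det_eq_one {A : Matrix n n α} (h : A.det = 1) : A⁻¹ = A.adjugate := by
  simp [inv_def, h]

end Matrix

attribute [local instance] Matrix.seminormedAddCommGroup Matrix.normedAddCommGroup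
  Matrix.normedSpace

namespace Matrix

theorem norm_mul_le_card_mul {l m n α : Type*} [Fintype l] [Fintype m] [Fintype n]
    [NonUnitalSeminormedRing α] (A : Matrix l m α) (B : Matrix m n α) :
    ‖A * B‖ ≤ Fintype.card m * ‖A‖ * ‖B‖ := by
  refine (norm_le_iff (by positivity)).2 fun i j => ?_
  calc ‖(A * B) i j‖ ≤ ∑ k, ‖A i k‖ * ‖B k j‖ :=
        (norm_sum_le _ _).trans (sum_le_sum fun k _ => norm_mul_le _ _)
    _ ≤ ∑ _k : m, ‖A‖ * ‖B‖ := sum_le_sum fun k _ => mul_le_mul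
        (norm_entry_le_entrywise_sup_norm A) (norm_entry_le_entrywise_sup_norm B)
        (norm_nonneg _) (norm_nonneg _)
    _ = Fintype.card m * ‖A‖ * ‖B‖ := by rw [sum_const, card_univ, nsmul_eq_mul, mul_assoc]

theorem contDiff_det {𝕜 n : Type*} [NontriviallyNormedField 𝕜] [Fintype n] [DecidableEq n]
    {k : WithTop ℕ∞} : ContDiff 𝕜 k (fun A : Matrix n n 𝕜 => A.det) := by
  simp only [det_apply]
  fun_prop

end Matrix

section Chart

variable {n : Type*} [DecidableEq n] {i0 : n}

variable (i0) in
abbrev OffCorner : Type _ := {p : n × n // p ≠ (i0, i0)}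

variable (i0) in
noncomputable def ofOffCorner (y : OffCorner i0 → ℝ) : Matrix n n ℝ :=
  1 + of fun i j => if h : (i, j) = (i0, i0) then 0 else y ⟨(i, j), h⟩

theorem ofOffCorner_zero : ofOffCorner i0 0 = 1 := by
  ext i j
  simp [ofOffCorner]

theorem ofOffCorner_sub_one_apply (x : Matrix n n ℝ) :
    ofOffCorner i0 (fun p => (x - 1) p.1.1 p.1.2) = x + (1 - x i0 i0) • single i0 i0 1 := by
  ext i j
  by_cases h : (i, j) = (i0, i0)
  · obtain ⟨rfl, rfl⟩ : i = i0 ∧ j = i0 := by simpa using h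
    simp [ofOffCorner]
  · have h' : ¬(i = i0 ∧ j = i0) := by simpa using h
    have h'' : ¬(i0 = i ∧ i0 = j) := by rintro ⟨rfl, rfl⟩; exact h rfl
    simp [ofOffCorner, h', h'']

variable [Fintype n]

theorem lipschitzWith_ofOffCorner : LipschitzWith 1 (ofOffCorner i0) := by
  refine LipschitzWith.of_dist_le_mul fun y y' => ?_
  rw [NNReal.coe_one, one_mul, dist_eq_norm, dist_eq_norm]
  refine (norm_le_iff (norm_nonneg _)).2 fun i j => ?_
  by_cases h : (i, j) = (i0, i0)
  · obtain ⟨rfl, rfl⟩ : i = i0 ∧ j = i0 := by simpa using h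
    simp [ofOffCorner]
  · have h' : ¬(i = i0 ∧ j = i0) := by simpa using h
    simpa [ofOffCorner, h'] using norm_le_pi_norm (y - y') ⟨(i, j), h⟩

theorem ofOffCorner_mem_closedBall {y : OffCorner i0 → ℝ} {r : ℝ}
    (hy : y ∈ closedBall 0 r) : ofOffCorner i0 y ∈ closedBall 1 r := by
  rw [mem_closedBall, ← ofOffCorner_zero (i0 := i0)]
  simpa using (lipschitzWith_ofOffCorner (i0 := i0)).dist_le_mul_of_le hy

variable (i0) in
noncomputable def slRetraction (x : Matrix n n ℝ) : Matrix n n ℝ :=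
  x + ((1 - x.det) / x.adjugate i0 i0) • single i0 i0 1

theorem det_slRetraction {x : Matrix n n ℝ} (h : x.adjugate i0 i0 ≠ 0) :
    (slRetraction i0 x).det = 1 := by
  rw [slRetraction, det_add_smul_single]
  field_simp
  ring

theorem slRetraction_of_det_eq_one {x : Matrix n n ℝ} (h : x.det = 1) :
    slRetraction i0 x = x := by
  simp [slRetraction, h]

theorem slRetraction_apply_of_ne (x : Matrix n n ℝ) {i j : n} (h : (i, j) ≠ (i0, i0)) :
    slRetraction i0 x i j = x i j := by
  have : ¬(i0 = i ∧ i0 = j) := by rintro ⟨rfl, rfl⟩; exact h rfl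
  simp [slRetraction, this]

theorem slRetraction_add_smul_single {x : Matrix n n ℝ} (h : x.adjugate i0 i0 ≠ 0) (c : ℝ) :
    slRetraction i0 (x + c • single i0 i0 1) = slRetraction i0 x := by
  rw [slRetraction, slRetraction, det_add_smul_single, adjugate_add_smul_single_apply, add_assoc,
    ← add_smul]
  congr 2
  field_simp
  ring

theorem contDiffAt_slRetraction {x : Matrix n n ℝ} (h : x.adjugate i0 i0 ≠ 0) :
    ContDiffAt ℝ 1 (slRetraction i0) x := by
  have hcof : ContDiff ℝ 1 (fun x : Matrix n n ℝ => x.adjugate i0 i0) := by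
    have : (fun x : Matrix n n ℝ => x.adjugate i0 i0)
        = fun x => (x + (1 : ℝ) • single i0 i0 1).det - x.det := by
      funext x
      rw [det_add_smul_single, one_mul, add_sub_cancel_left]
    rw [this]
    exact (contDiff_det.comp (by fun_prop)).sub contDiff_det
  exact contDiffAt_id.add <|
    ((contDiffAt_const.sub contDiff_det.contDiffAt).div hcof.contDiffAt h).smul contDiffAt_const

variable (i0) in
noncomputable def slChart (y : OffCorner i0 → ℝ) : Matrix n n ℝ :=
  slRetraction i0 (ofOffCorner i0 y)

theorem slChart_apply_of_ne (y : OffCorner i0 → ℝ) {i j : n} (h : (i, j) ≠ (i0, i0)) :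
    slChart i0 y i j = (1 : Matrix n n ℝ) i j + y ⟨(i, j), h⟩ := by
  have h' : ¬(i = i0 ∧ j = i0) := by simpa using h
  simp [slChart, slRetraction_apply_of_ne _ h, ofOffCorner, h']

theorem dist_le_dist_slChart (y y' : OffCorner i0 → ℝ) :
    dist y y' ≤ dist (slChart i0 y) (slChart i0 y') := by
  refine (dist_pi_le_iff dist_nonneg).2 fun ⟨(i, j), h⟩ => ?_
  rw [dist_eq_norm, dist_eq_norm]
  calc ‖y ⟨(i, j), h⟩ - y' ⟨(i, j), h⟩‖ = ‖(slChart i0 y - slChart i0 y') i j‖ := by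
        simp [slChart_apply_of_ne _ h]
    _ ≤ _ := norm_entry_le_entrywise_sup_norm _

variable (i0) in
theorem exists_slChart_parametrization : ∃ r > 0, ∃ K : ℝ≥0,
    LipschitzOnWith K (slChart i0) (closedBall 0 r) ∧
    MapsTo (slChart i0) (closedBall 0 r) {x | x.det = 1} ∧
    {x | x.det = 1} ∩ closedBall 1 r ⊆ slChart i0 '' closedBall 0 r := by
  have h1 : (1 : Matrix n n ℝ).adjugate i0 i0 ≠ 0 := by simp
  obtain ⟨K, t, ht, hK⟩ := (contDiffAt_slRetraction h1).exists_lipschitzOnWith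
  have hadj : ∀ᶠ x : Matrix n n ℝ in 𝓝 1, x.adjugate i0 i0 ≠ 0 :=
    ((continuous_id.matrix_adjugate).matrix_elem i0 i0).continuousAt.eventually_ne h1
  obtain ⟨r, hr, hsub⟩ := nhds_basis_closedBall.mem_iff.1 (Filter.inter_mem ht hadj)
  refine ⟨r, hr, K, ?_, fun y hy => det_slRetraction (hsub (ofOffCorner_mem_closedBall hy)).2, ?_⟩
  · have h := hK.comp (lipschitzWith_ofOffCorner (i0 := i0)).lipschitzOnWith
      fun y (hy : y ∈ closedBall 0 r) => (hsub (ofOffCorner_mem_closedBall hy)).1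
    rwa [mul_one] at h
  · rintro x ⟨hdet, hx⟩
    refine ⟨fun p => (x - 1) p.1.1 p.1.2, ?_, ?_⟩
    · rw [mem_closedBall, dist_zero_right]
      refine (pi_norm_le_iff_of_nonneg hr.le).2 fun p => ?_
      exact (norm_entry_le_entrywise_sup_norm _).trans (by rwa [← dist_eq_norm])
    · rw [slChart, ofOffCorner_sub_one_apply, slRetraction_add_smul_single (hsub hx).2,
        slRetraction_of_det_eq_one hdet]

variable (i0) in
theorem card_offCorner : Fintype.card (OffCorner i0) = Fintype.card n ^ 2 - 1 := by
  rw [Fintype.card_subtype_compl, Fintype.card_prod, Fintype.card_subtype_eq, sq]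

end Chart

section Grid

noncomputable def intervalGrid (r δ : ℝ) : Finset ℝ :=
  (range (⌊2 * r / δ⌋₊ + 1)).image fun k : ℕ => -r + k * δ

variable {r δ : ℝ}

theorem card_intervalGrid (hδ : 0 < δ) : #(intervalGrid r δ) = ⌊2 * r / δ⌋₊ + 1 := by
  rw [intervalGrid, Finset.card_image_of_injective _ fun a b h => by simpa [hδ.ne'] using h,
    card_range]

theorem abs_le_of_mem_intervalGrid (hr : 0 ≤ r) (hδ : 0 < δ) {s : ℝ}
    (hs : s ∈ intervalGrid r δ) : |s| ≤ r := by
  obtain ⟨k, hk, rfl⟩ := mem_image.1 hs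
  have hk : (k : ℝ) ≤ 2 * r / δ :=
    (Nat.cast_le.2 (Nat.lt_succ_iff.1 (mem_range.1 hk))).trans (Nat.floor_le (by positivity))
  rw [le_div_iff₀ hδ] at hk
  rw [abs_le]
  constructor <;> nlinarith [show (0 : ℝ) ≤ k * δ by positivity]

theorem exists_mem_intervalGrid_abs_sub_le (hδ : 0 < δ) {t : ℝ} (ht : |t| ≤ r) :
    ∃ s ∈ intervalGrid r δ, |t - s| ≤ δ := by
  obtain ⟨htl, htr⟩ := abs_le.1 ht
  have hk : ⌊(t + r) / δ⌋₊ < ⌊2 * r / δ⌋₊ + 1 :=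
    Nat.lt_succ_of_le (Nat.floor_le_floor (by gcongr; linarith))
  refine ⟨-r + ⌊(t + r) / δ⌋₊ * δ, mem_image.2 ⟨_, mem_range.2 hk, rfl⟩, abs_le.2 ⟨?_, ?_⟩⟩
  · have := Nat.floor_le (div_nonneg (by linarith : 0 ≤ t + r) hδ.le)
    rw [le_div_iff₀ hδ] at this
    linarith
  · have := Nat.lt_floor_add_one ((t + r) / δ)
    rw [div_lt_iff₀ hδ] at this
    linarith

theorem le_abs_sub_of_mem_intervalGrid (hδ : 0 < δ) {s s' : ℝ} (hs : s ∈ intervalGrid r δ)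
    (hs' : s' ∈ intervalGrid r δ) (h : s ≠ s') : δ ≤ |s - s'| := by
  obtain ⟨k, -, rfl⟩ := mem_image.1 hs
  obtain ⟨k', -, rfl⟩ := mem_image.1 hs'
  have hkk : k ≠ k' := fun hc => h (by rw [hc])
  have : (1 : ℝ) ≤ |(k : ℝ) - k'| := by
    have : (1 : ℤ) ≤ |(k : ℤ) - k'| := Int.one_le_abs (sub_ne_zero.2 (by exact_mod_cast hkk))
    exact_mod_cast this
  calc δ ≤ |(k : ℝ) - k'| * δ := le_mul_of_one_le_left hδ.le this
    _ = |((k : ℝ) - k') * δ| := by rw [abs_mul, abs_of_pos hδ]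
    _ = |-r + k * δ - (-r + k' * δ)| := by ring_nf

variable (ι : Type*) [Fintype ι] [DecidableEq ι] in
noncomputable def cubeGrid (r δ : ℝ) : Finset (ι → ℝ) :=
  Fintype.piFinset fun _ => intervalGrid r δ

variable {ι : Type*} [Fintype ι] [DecidableEq ι]

theorem card_cubeGrid (hδ : 0 < δ) :
    #(cubeGrid ι r δ) = (⌊2 * r / δ⌋₊ + 1) ^ Fintype.card ι := by
  simp [cubeGrid, Fintype.card_piFinset, card_intervalGrid hδ]

theorem mem_closedBall_of_mem_cubeGrid (hr : 0 ≤ r) (hδ : 0 < δ) {y : ι → ℝ}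
    (hy : y ∈ cubeGrid ι r δ) : y ∈ closedBall 0 r := by
  rw [mem_closedBall, dist_zero_right, pi_norm_le_iff_of_nonneg hr]
  exact fun i => abs_le_of_mem_intervalGrid hr hδ (Fintype.mem_piFinset.1 hy i)

theorem exists_mem_cubeGrid_dist_le (hδ : 0 < δ) {x : ι → ℝ} (hx : x ∈ closedBall 0 r) :
    ∃ y ∈ cubeGrid ι r δ, dist x y ≤ δ := by
  rw [mem_closedBall, dist_zero_right] at hx
  choose y hy hxy using fun i =>
    exists_mem_intervalGrid_abs_sub_le hδ ((norm_le_pi_norm x i).trans hx)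
  exact ⟨y, Fintype.mem_piFinset.2 hy, (dist_pi_le_iff hδ.le).2 hxy⟩

theorem le_dist_of_mem_cubeGrid (hδ : 0 < δ) {y y' : ι → ℝ} (hy : y ∈ cubeGrid ι r δ)
    (hy' : y' ∈ cubeGrid ι r δ) (h : y ≠ y') : δ ≤ dist y y' := by
  obtain ⟨i, hi⟩ := Function.ne_iff.1 h
  exact (le_abs_sub_of_mem_intervalGrid hδ (Fintype.mem_piFinset.1 hy i)
    (Fintype.mem_piFinset.1 hy' i) hi).trans (dist_le_pi_dist y y' i)

theorem card_cubeGrid_div_le {M ε : ℝ} (hr : 0 ≤ r) (hM : 0 < M) (hε : 0 < ε) (hε1 : ε ≤ 1) :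
    (#(cubeGrid ι r (ε / M)) : ℝ≥0∞) ≤ ENNReal.ofReal (((2 * r * M + 1) / ε) ^ Fintype.card ι) := by
  rw [← ENNReal.ofReal_natCast, card_cubeGrid (by positivity), Nat.cast_pow, Nat.cast_succ]
  refine ENNReal.ofReal_le_ofReal ?_
  gcongr
  calc (⌊2 * r / (ε / M)⌋₊ : ℝ) + 1 ≤ 2 * r * M / ε + 1 := by
        rw [div_div_eq_mul_div]
        gcongr
        exact Nat.floor_le (by positivity)
    _ ≤ (2 * r * M + 1) / ε := by
        rw [add_div]
        gcongr
        rwa [le_div_iff₀ hε, one_mul]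

theorem ofReal_le_card_cubeGrid_mul {M ε : ℝ} (hr : 0 ≤ r) (hM : 0 < M) (hε : 0 < ε) :
    ENNReal.ofReal ((2 * r / M / ε) ^ Fintype.card ι) ≤ #(cubeGrid ι r (M * ε)) := by
  rw [← ENNReal.ofReal_natCast, card_cubeGrid (by positivity), Nat.cast_pow, Nat.cast_succ, div_div]
  refine ENNReal.ofReal_le_ofReal ?_
  gcongr
  exact (Nat.lt_floor_add_one _).le

end Grid

section SLBall

variable {n : Type*} [Fintype n] [DecidableEq n]

instance {m : Type*} [Fintype m] : BorelSpace (Matrix m n ℝ) :=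
  inferInstanceAs (BorelSpace (m → n → ℝ))

variable (n) in
def slBall (ε : ℝ) : Set (Matrix n n ℝ) := {x | x.det = 1} ∩ closedBall 1 ε

theorem slBall_eq_setOf {ε : ℝ} (hε : 0 ≤ ε) :
    slBall n ε = {x : Matrix n n ℝ | x.det = 1 ∧ ∀ i j, |x i j - (1 : Matrix n n ℝ) i j| ≤ ε} := by
  ext x
  simp [slBall, dist_eq_norm, norm_le_iff hε]

theorem measurableSet_slBall (ε : ℝ) : MeasurableSet (slBall n ε) :=
  ((isClosed_singleton.preimage continuous_id.matrix_det).inter isClosed_closedBall).measurableSet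

theorem inv_mul_mem_slBall {g x : Matrix n n ℝ} {ε : ℝ} (hg : g.det = 1) (hx : x.det = 1)
    (h : Fintype.card n * ‖g⁻¹‖ * ‖x - g‖ ≤ ε) : g⁻¹ * x ∈ slBall n ε := by
  refine ⟨by simp [det_nonsing_inv, hg, hx], ?_⟩
  rw [mem_closedBall, dist_eq_norm]
  have : g⁻¹ * x - 1 = g⁻¹ * (x - g) := by
    rw [Matrix.mul_sub, Matrix.nonsing_inv_mul g (by simp [hg])]
  rw [this]
  exact (norm_mul_le_card_mul _ _).trans h

theorem norm_sub_le_of_inv_mul_mem_slBall {g x : Matrix n n ℝ} {ε : ℝ} (hg : g.det = 1)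
    (hx : g⁻¹ * x ∈ slBall n ε) : ‖x - g‖ ≤ Fintype.card n * ‖g‖ * ε := by
  have : x - g = g * (g⁻¹ * x - 1) := by
    rw [Matrix.mul_sub, ← Matrix.mul_assoc, Matrix.mul_nonsing_inv g (by simp [hg]),
      Matrix.one_mul, Matrix.mul_one]
  rw [this]
  refine (norm_mul_le_card_mul _ _).trans ?_
  gcongr
  exact (dist_eq_norm _ _).symm.trans_le hx.2

theorem inv_mul_preimage_slBall_subset_closedBall {g : Matrix n n ℝ} (hg : g.det = 1) (ε : ℝ) :
    (g⁻¹ * ·) ⁻¹' slBall n ε ⊆ closedBall 0 (‖g‖ + Fintype.card n * ‖g‖ * ε) := by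
  intro x hx
  rw [mem_closedBall, dist_zero_right]
  calc ‖x‖ ≤ ‖g‖ + ‖x - g‖ := norm_le_insert' _ _
    _ ≤ _ := by gcongr; exact norm_sub_le_of_inv_mul_mem_slBall hg hx

variable {ι : Type*} [Fintype ι] [DecidableEq ι] {φ : (ι → ℝ) → Matrix n n ℝ} {r ε δ : ℝ}

theorem image_subset_biUnion_inv_mul_preimage_slBall {K : ℝ≥0} {C : ℝ}
    (hlip : LipschitzOnWith K φ (closedBall 0 r))
    (hmaps : MapsTo φ (closedBall 0 r) {x | x.det = 1})
    (hinv : ∀ y ∈ closedBall 0 r, ‖(φ y)⁻¹‖ ≤ C) (hr : 0 ≤ r) (hδ : 0 < δ)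
    (hε : Fintype.card n * C * (K * δ) ≤ ε) :
    φ '' closedBall 0 r ⊆ ⋃ y ∈ cubeGrid ι r δ, ((φ y)⁻¹ * ·) ⁻¹' slBall n ε := by
  rintro _ ⟨y₀, hy₀, rfl⟩
  obtain ⟨y, hy, hyy⟩ := exists_mem_cubeGrid_dist_le hδ hy₀
  have hy' := mem_closedBall_of_mem_cubeGrid hr hδ hy
  refine mem_biUnion hy (inv_mul_mem_slBall (hmaps hy') (hmaps hy₀) (le_trans ?_ hε))
  have hC : 0 ≤ C := (norm_nonneg _).trans (hinv y hy')
  rw [← dist_eq_norm]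
  gcongr
  exacts [hinv y hy', (hlip.dist_le_mul y₀ hy₀ y hy').trans (by gcongr)]

theorem pairwiseDisjoint_inv_mul_preimage_slBall {R : ℝ}
    (hmaps : MapsTo φ (closedBall 0 r) {x | x.det = 1})
    (hdist : ∀ y y', dist y y' ≤ dist (φ y) (φ y')) (hR : ∀ y ∈ closedBall 0 r, ‖φ y‖ ≤ R)
    (hr : 0 ≤ r) (hδ : 0 < δ) (hε : 2 * Fintype.card n * R * ε < δ) :
    (cubeGrid ι r δ : Set (ι → ℝ)).PairwiseDisjoint fun y => ((φ y)⁻¹ * ·) ⁻¹' slBall n ε := by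
  intro y hy y' hy' hne
  refine Set.disjoint_left.2 fun x hx hx' => ?_
  have hε0 : 0 ≤ ε := dist_nonneg.trans hx.2
  have hnear : ∀ y ∈ cubeGrid ι r δ, x ∈ ((φ y)⁻¹ * ·) ⁻¹' slBall n ε →
      dist x (φ y) ≤ Fintype.card n * R * ε := fun y hy hx => by
    have hy := mem_closedBall_of_mem_cubeGrid hr hδ hy
    rw [dist_eq_norm]
    refine (norm_sub_le_of_inv_mul_mem_slBall (hmaps hy) hx).trans ?_
    gcongr
    exact hR y hy
  have := (le_dist_of_mem_cubeGrid hδ hy hy' hne).trans ((hdist y y').trans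
    (dist_triangle_left (φ y) (φ y') x))
  linarith [hnear y hy hx, hnear y' hy' hx']

end SLBall

theorem ENNReal.ofReal_toReal_div_le {a m : ℝ≥0∞} {t : ℝ} (ha : a ≠ ∞) (ht : 0 < t)
    (h : a ≤ ENNReal.ofReal t * m) : ENNReal.ofReal (a.toReal / t) ≤ m := by
  rwa [ENNReal.ofReal_div_of_pos ht, ENNReal.ofReal_toReal ha, ENNReal.div_le_iff_le_mul
    (Or.inl (ENNReal.ofReal_pos.2 ht).ne') (Or.inl ENNReal.ofReal_ne_top), mul_comm]

theorem ENNReal.le_ofReal_toReal_div {a m : ℝ≥0∞} {t : ℝ} (ha : a ≠ ∞) (ht : 0 < t)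
    (h : ENNReal.ofReal t * m ≤ a) : m ≤ ENNReal.ofReal (a.toReal / t) := by
  rwa [ENNReal.ofReal_div_of_pos ht, ENNReal.ofReal_toReal ha, ENNReal.le_div_iff_mul_le
    (Or.inl (ENNReal.ofReal_pos.2 ht).ne') (Or.inl ENNReal.ofReal_ne_top), mul_comm]

section Haar

variable {N : ℕ} {μ : Measure (Matrix (Fin N) (Fin N) ℝ)}

theorem measure_preimage_inv_mul_slBall (hμ : IsHaarOnSL μ) {g : Matrix (Fin N) (Fin N) ℝ}
    (hg : g.det = 1) (ε : ℝ) : μ ((g⁻¹ * ·) ⁻¹' slBall (Fin N) ε) = μ (slBall (Fin N) ε) :=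
  hμ.2.1 _ (by simp [det_nonsing_inv, hg]) _ (measurableSet_slBall ε)

variable {ι : Type*} {s : Finset ι} {g : ι → Matrix (Fin N) (Fin N) ℝ} {ε : ℝ}

theorem measure_le_card_mul_measure_slBall (hμ : IsHaarOnSL μ) (hg : ∀ i ∈ s, (g i).det = 1)
    {S : Set (Matrix (Fin N) (Fin N) ℝ)}
    (hS : S ⊆ ⋃ i ∈ s, ((g i)⁻¹ * ·) ⁻¹' slBall (Fin N) ε) :
    μ S ≤ #s * μ (slBall (Fin N) ε) :=
  calc μ S ≤ ∑ i ∈ s, μ (((g i)⁻¹ * ·) ⁻¹' slBall (Fin N) ε) :=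
        (measure_mono hS).trans (measure_biUnion_finset_le _ _)
    _ = #s * μ (slBall (Fin N) ε) := by
        rw [sum_congr rfl fun i hi => measure_preimage_inv_mul_slBall hμ (hg i hi) ε, sum_const,
          nsmul_eq_mul]

theorem card_mul_measure_slBall_le (hμ : IsHaarOnSL μ) (hg : ∀ i ∈ s, (g i).det = 1)
    (hdisj : (s : Set ι).PairwiseDisjoint fun i => ((g i)⁻¹ * ·) ⁻¹' slBall (Fin N) ε)
    {T : Set (Matrix (Fin N) (Fin N) ℝ)} (hT : ∀ i ∈ s, ((g i)⁻¹ * ·) ⁻¹' slBall (Fin N) ε ⊆ T) :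
    #s * μ (slBall (Fin N) ε) ≤ μ T :=
  calc #s * μ (slBall (Fin N) ε) = ∑ i ∈ s, μ (((g i)⁻¹ * ·) ⁻¹' slBall (Fin N) ε) := by
        rw [sum_congr rfl fun i hi => measure_preimage_inv_mul_slBall hμ (hg i hi) ε, sum_const,
          nsmul_eq_mul]
    _ = μ (⋃ i ∈ s, ((g i)⁻¹ * ·) ⁻¹' slBall (Fin N) ε) :=
        (measure_biUnion_finset hdisj fun i _ =>
          (continuous_const.matrix_mul continuous_id).measurable (measurableSet_slBall ε)).symm
    _ ≤ μ T := measure_mono (iUnion₂_subset hT)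

end Haar

section Bounds

variable {N : ℕ} {μ : Measure (Matrix (Fin N) (Fin N) ℝ)}

theorem exists_ofReal_mul_pow_le_measure_slBall (hμ : IsHaarOnSL μ) (i0 : Fin N) :
    ∃ c > 0, ∀ ε, 0 < ε → ε ≤ 1 →
      ENNReal.ofReal (c * ε ^ (N ^ 2 - 1)) ≤ μ (slBall (Fin N) ε) := by
  obtain ⟨r, hr, K, hlip, hmaps, hsurj⟩ := exists_slChart_parametrization i0
  obtain ⟨C, hC⟩ := (isCompact_closedBall _ r).exists_bound_of_continuousOn
    ((continuous_id.matrix_adjugate).comp_continuousOn hlip.continuousOn)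
  have hC0 : 0 ≤ C := (norm_nonneg _).trans (hC 0 (mem_closedBall_self hr.le))
  have hinv : ∀ y ∈ closedBall 0 r, ‖(slChart i0 y)⁻¹‖ ≤ C := fun y hy => by
    rw [inv_eq_adjugate_of_det_eq_one (hmaps hy)]
    exact hC y hy
  set M : ℝ := N * C * K + 1
  set a := μ (ball (1 : Matrix (Fin N) (Fin N) ℝ) r)
  have ha : a ≠ ∞ := ((measure_mono ball_subset_closedBall).trans_lt
    (hμ.2.2.2 _ (isCompact_closedBall _ _))).ne
  have ha0 : 0 < a.toReal :=
    ENNReal.toReal_pos (hμ.2.2.1 _ isOpen_ball ⟨1, mem_ball_self hr, by simp⟩).ne' ha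
  refine ⟨a.toReal / (2 * r * M + 1) ^ (N ^ 2 - 1), by positivity, fun ε hε hε1 => ?_⟩
  have hδ : 0 < ε / M := by positivity
  have hMε : Fintype.card (Fin N) * C * (K * (ε / M)) ≤ ε := by
    rw [Fintype.card_fin, ← mul_assoc, mul_div_assoc', div_le_iff₀ (by positivity)]
    nlinarith
  have hcount : a ≤ ENNReal.ofReal (((2 * r * M + 1) / ε) ^ (N ^ 2 - 1)) * μ (slBall (Fin N) ε) :=
    calc a ≤ μ ({x | x.det = 1} ∩ closedBall 1 r) := by
          rw [Set.inter_comm, measure_inter_conull (by simpa [Set.compl_ofPred] using hμ.1)]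
          exact measure_mono ball_subset_closedBall
      _ ≤ #(cubeGrid (OffCorner i0) r (ε / M)) * μ (slBall (Fin N) ε) :=
          measure_le_card_mul_measure_slBall hμ
            (fun y hy => hmaps (mem_closedBall_of_mem_cubeGrid hr.le hδ hy))
            (hsurj.trans <|
              image_subset_biUnion_inv_mul_preimage_slBall hlip hmaps hinv hr.le hδ hMε)
      _ ≤ _ := by
          grw [card_cubeGrid_div_le hr.le (by positivity) hε hε1, card_offCorner, Fintype.card_fin]
  convert ENNReal.ofReal_toReal_div_le ha (by positivity) hcount using 2
  rw [div_pow]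
  field_simp

theorem exists_measure_slBall_le_ofReal_mul_pow (hμ : IsHaarOnSL μ) (i0 : Fin N) :
    ∃ C > 0, ∀ ε, 0 < ε → ε ≤ 1 →
      μ (slBall (Fin N) ε) ≤ ENNReal.ofReal (C * ε ^ (N ^ 2 - 1)) := by
  obtain ⟨r, hr, K, hlip, hmaps, -⟩ := exists_slChart_parametrization i0
  obtain ⟨R, hR⟩ := (isCompact_closedBall _ r).exists_bound_of_continuousOn hlip.continuousOn
  have hR0 : 0 ≤ R := (norm_nonneg _).trans (hR 0 (mem_closedBall_self hr.le))
  set M : ℝ := 2 * N * R + 1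
  set V := μ (closedBall (0 : Matrix (Fin N) (Fin N) ℝ) (R + N * R))
  have hV : V ≠ ∞ := (hμ.2.2.2 _ (isCompact_closedBall _ _)).ne
  refine ⟨V.toReal / (2 * r / M) ^ (N ^ 2 - 1) + 1, by positivity, fun ε hε hε1 => ?_⟩
  have hδ : 0 < M * ε := by positivity
  have hmem : ∀ y ∈ cubeGrid (OffCorner i0) r (M * ε), y ∈ closedBall 0 r := fun y hy =>
    mem_closedBall_of_mem_cubeGrid hr.le hδ hy
  have hsub : ∀ y ∈ cubeGrid (OffCorner i0) r (M * ε),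
      ((slChart i0 y)⁻¹ * ·) ⁻¹' slBall (Fin N) ε ⊆ closedBall 0 (R + N * R) := fun y hy =>
    (inv_mul_preimage_slBall_subset_closedBall (hmaps (hmem y hy)) ε).trans
      (closedBall_subset_closedBall <| by
        grw [Fintype.card_fin, hR y (hmem y hy), hε1, mul_one])
  have hpack : ENNReal.ofReal ((2 * r / M / ε) ^ (N ^ 2 - 1)) * μ (slBall (Fin N) ε) ≤ V :=
    calc _ ≤ #(cubeGrid (OffCorner i0) r (M * ε)) * μ (slBall (Fin N) ε) := by
          grw [← ofReal_le_card_cubeGrid_mul hr.le (by positivity) hε, card_offCorner,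
            Fintype.card_fin]
      _ ≤ V := card_mul_measure_slBall_le hμ (fun y hy => hmaps (hmem y hy))
          (pairwiseDisjoint_inv_mul_preimage_slBall hmaps dist_le_dist_slChart hR hr.le hδ
            (by rw [Fintype.card_fin]; linarith)) hsub
  calc μ (slBall (Fin N) ε) ≤ ENNReal.ofReal (V.toReal / (2 * r / M / ε) ^ (N ^ 2 - 1)) :=
        ENNReal.le_ofReal_toReal_div hV (by positivity) hpack
    _ = ENNReal.ofReal (V.toReal / (2 * r / M) ^ (N ^ 2 - 1) * ε ^ (N ^ 2 - 1)) := by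
        rw [div_pow _ ε]
        field_simp
    _ ≤ _ := by gcongr; linarith

end Bounds

/-- The Haar measure of the `ε`-ball (sup norm) around the identity
in `SL_N(ℝ)` is comparable to `ε^{N²-1}`, for `ε ∈ (0,1]`. -/
theorem statement10 (N : ℕ) (hN : 2 ≤ N)
    (μ : Measure (Matrix (Fin N) (Fin N) ℝ)) (hμ : IsHaarOnSL μ) :
    ∃ c C : ℝ, 0 < c ∧ 0 < C ∧ ∀ ε : ℝ, 0 < ε → ε ≤ 1 →
      ENNReal.ofReal (c * ε ^ (N ^ 2 - 1)) ≤
        μ {g | g.det = 1 ∧ ∀ i j, |g i j - (1 : Matrix (Fin N) (Fin N) ℝ) i j| ≤ ε} ∧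
      μ {g | g.det = 1 ∧ ∀ i j, |g i j - (1 : Matrix (Fin N) (Fin N) ℝ) i j| ≤ ε} ≤
        ENNReal.ofReal (C * ε ^ (N ^ 2 - 1)) := by
  have i0 : Fin N := ⟨0, by omega⟩
  obtain ⟨c, hc, hlower⟩ := exists_ofReal_mul_pow_le_measure_slBall hμ i0
  obtain ⟨C, hC, hupper⟩ := exists_measure_slBall_le_ofReal_mul_pow hμ i0
  refine ⟨c, C, hc, hC, fun ε hε hε1 => ?_⟩
  rw [← slBall_eq_setOf hε.le]
  exact ⟨hlower ε hε hε1, hupper ε hε hε1⟩
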